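/- (Abelian property) For every mass distribution μ₀ on ℤ^d with finite support and every capacity κ > 0, any two infinitive toppling sequences T₁ and T₂ for the boundary sandpile BS(μ₀, κ) have the same odometer: u₁(x) = u₂(x) for all x ∈ ℤ^d, where u_i is the pointwise limit of the odometer functions along T_i. -/

import Mathlib

/-!
Along any toppling sequence the configuration is a function of the odometer `uₙ`: the mass is
`μ₀ + Δuₙ` and the visited set is `supp μ₀` together with the neighbours of `{uₙ > 0}`.
Let `u` be the limit odometer of an infinitive sequence. Its limit configuration is stable:
a site that stayed unstable would be toppled infinitely often with mass bounded below,
pushing the odometer past `u`. Stability then shows, by induction along any other toppling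
sequence, that its odometer stays below `u`: toppling `x` raises the odometer at `x` to
`μ₀(x) + (1/2d) ∑_{y ∼ x} uₙ(y) ≤ u(x) + (μ₀ + Δu)(x)`. The excess `(μ₀ + Δu)(x)` is `≤ 0` inside
the limit visited set, and on its boundary `u(x) = 0`, so there a toppling would need mass above
`κ ≥ (μ₀ + Δu)(x)`. Exchanging the two sequences gives `u₁ ≤ u₂ ≤ u₁`.
-/

open Filter

namespace Sandpile

/-- Lattice sites of `ℤ^d`. -/
abbrev Site (d : ℕ) := Fin d → ℤ

/-- Two sites are neighbours iff their `ℓ¹`-distance equals `1`. -/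
def nbr {d : ℕ} (x y : Site d) : Prop := (∑ i, |x i - y i|) = 1

/-- The (combinatorial) boundary of a set `V ⊆ ℤ^d`. -/
def bdry {d : ℕ} (V : Set (Site d)) : Set (Site d) :=
  {x | x ∈ V ∧ ∃ y, nbr x y ∧ y ∉ V}

/-- The (combinatorial) interior of a set `V ⊆ ℤ^d`. -/
def intr {d : ℕ} (V : Set (Site d)) : Set (Site d) := V \ bdry V

/-- The discrete Laplacian `Δu(x) = (1/(2d)) ∑_{y ∼ x} (u y - u x)`; the `2d`
neighbours of `x` are exactly the points `x ± eᵢ`. -/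
noncomputable def lap {d : ℕ} (u : Site d → ℝ) (x : Site d) : ℝ :=
  (1 / (2 * (d : ℝ))) *
    ∑ i : Fin d, ((u (x + Pi.single i 1) - u x) + (u (x - Pi.single i 1) - u x))

/-- A mass distribution: nonnegative with finite support. -/
def IsMassDist {d : ℕ} (μ : Site d → ℝ) : Prop :=
  (∀ x, 0 ≤ μ x) ∧ (Function.support μ).Finite

/-- Euclidean norm of a lattice point. -/
noncomputable def enorm {d : ℕ} (x : Site d) : ℝ :=
  Real.sqrt (∑ i, ((x i : ℝ)) ^ 2)

/-- A configuration of the boundary sandpile: visited sites, current mass, odometer. -/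
structure Config (d : ℕ) where
  V : Set (Site d)
  μ : Site d → ℝ
  u : Site d → ℝ

/-- A site is unstable if it is a boundary site of the visited set carrying mass above
the capacity `κ`, or an interior site carrying positive mass. -/
def Unstable {d : ℕ} (κ : ℝ) (c : Config d) (x : Site d) : Prop :=
  (x ∈ bdry c.V ∧ κ < c.μ x) ∨ (x ∈ intr c.V ∧ 0 < c.μ x)

open Classical in
/-- Toppling the site `x`: if `x` is unstable, its mass is distributed equally among its
`2d` neighbours, the odometer at `x` increases by the toppled mass, and the neighbours
of `x` become visited; toppling a stable site changes nothing. -/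
noncomputable def topple {d : ℕ} (κ : ℝ) (c : Config d) (x : Site d) : Config d :=
  if Unstable κ c x then
    { V := c.V ∪ {y | nbr x y}
      μ := fun y => if y = x then 0 else
        if nbr x y then c.μ y + c.μ x / (2 * (d : ℝ)) else c.μ y
      u := fun y => if y = x then c.u y + c.μ y else c.u y }
  else c

/-- The evolution of the boundary sandpile `BS(μ₀, κ)` along a toppling sequence `T`:
start from `V₀ = supp μ₀`, `u₀ = 0`, and at step `k` topple the site `T k`. -/
noncomputable def evolve {d : ℕ} (κ : ℝ) (μ0 : Site d → ℝ) (T : ℕ → Site d) :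
    ℕ → Config d
  | 0 => ⟨Function.support μ0, μ0, fun _ => 0⟩
  | k + 1 => topple κ (evolve κ μ0 T k) (T k)

/-- A toppling sequence is infinitive if every site occurs in it infinitely often. -/
def Infinitive {d : ℕ} (T : ℕ → Site d) : Prop :=
  ∀ x : Site d, {k : ℕ | T k = x}.Infinite

open Topology

section Development

variable {d : ℕ}

theorem sum_abs_eq_one_iff (v : Site d) :
    ∑ i, |v i| = 1 ↔ ∃ i, v = Pi.single i 1 ∨ v = -Pi.single i 1 := by
  constructor
  · intro h
    obtain ⟨i, hi⟩ : ∃ i, v i ≠ 0 := by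
      by_contra! h0
      simp [h0] at h
    have hsplit := Finset.add_sum_erase Finset.univ (fun j => |v j|) (Finset.mem_univ i)
    have hrest : ∑ j ∈ Finset.univ.erase i, |v j| = 0 := by
      have : 0 < |v i| := abs_pos.mpr hi
      have := Finset.sum_nonneg (s := Finset.univ.erase i) fun j _ => abs_nonneg (v j)
      omega
    have hzero : ∀ j ≠ i, v j = 0 := fun j hj => abs_eq_zero.mp <|
      (Finset.sum_eq_zero_iff_of_nonneg fun j _ => abs_nonneg (v j)).mp hrest j
        (Finset.mem_erase.mpr ⟨hj, Finset.mem_univ j⟩)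
    have hvi : |v i| = 1 := by omega
    refine ⟨i, ?_⟩
    rcases abs_eq (zero_le_one' ℤ) |>.mp hvi with h1 | h1
    · left; ext j; by_cases hj : j = i <;> simp_all
    · right; ext j; by_cases hj : j = i <;> simp_all
  · rintro ⟨i, rfl | rfl⟩ <;> simp [Pi.single_apply, apply_ite]

theorem nbr_iff {x y : Site d} : nbr x y ↔ ∃ i, y = x + Pi.single i 1 ∨ y = x - Pi.single i 1 := by
  have : nbr x y ↔ ∑ i, |(y - x) i| = 1 := by simp only [nbr, Pi.sub_apply, abs_sub_comm]
  simp only [this, sum_abs_eq_one_iff, sub_eq_iff_eq_add', ← sub_eq_add_neg]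

theorem nbr_comm {x y : Site d} : nbr x y ↔ nbr y x := by
  simp only [nbr, abs_sub_comm]

theorem nbr_irrefl (x : Site d) : ¬ nbr x x := by
  simp [nbr]

theorem nbr_add_single (x : Site d) (i : Fin d) : nbr x (x + Pi.single i 1) :=
  nbr_iff.mpr ⟨i, .inl rfl⟩

theorem nbr_sub_single (x : Site d) (i : Fin d) : nbr x (x - Pi.single i 1) :=
  nbr_iff.mpr ⟨i, .inr rfl⟩

theorem add_single_ne_sub_single (x : Site d) (i j : Fin d) :
    x + Pi.single i 1 ≠ x - Pi.single j 1 := by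
  intro h
  have := congrFun h i
  by_cases hij : i = j
  · subst hij
    simp only [Pi.add_apply, Pi.sub_apply, Pi.single_eq_same] at this
    omega
  · simp [hij] at this

theorem single_one_inj {i j : Fin d} : (Pi.single i 1 : Site d) = Pi.single j 1 ↔ i = j := by
  refine ⟨fun h => ?_, fun h => h ▸ rfl⟩
  by_contra hij
  simpa [hij] using congrFun h i

noncomputable def nbrSum (u : Site d → ℝ) (x : Site d) : ℝ :=
  ∑ i, (u (x + Pi.single i 1) + u (x - Pi.single i 1))

theorem nbrSum_add (u v : Site d → ℝ) (x : Site d) :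
    nbrSum (u + v) x = nbrSum u x + nbrSum v x := by
  simp only [nbrSum, Pi.add_apply, ← Finset.sum_add_distrib]
  exact Finset.sum_congr rfl fun _ _ => by ring

theorem nbrSum_mono {u v : Site d → ℝ} (h : u ≤ v) (x : Site d) : nbrSum u x ≤ nbrSum v x :=
  Finset.sum_le_sum fun _ _ => add_le_add (h _) (h _)

open Classical in
theorem nbrSum_single (z : Site d) (m : ℝ) (x : Site d) :
    nbrSum (Pi.single z m) x = if nbr x z then m else 0 := by
  split_ifs with h
  · obtain ⟨i, rfl | rfl⟩ := nbr_iff.mp h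
    · simp [nbrSum, Pi.single_apply, (add_single_ne_sub_single x i _).symm, single_one_inj]
    · simp [nbrSum, Pi.single_apply, add_single_ne_sub_single x _ i, single_one_inj]
  · refine Finset.sum_eq_zero fun i _ => ?_
    have h1 : x + Pi.single i 1 ≠ z := fun hz => h (hz ▸ nbr_add_single x i)
    have h2 : x - Pi.single i 1 ≠ z := fun hz => h (hz ▸ nbr_sub_single x i)
    simp [h1, h2]

/-- `μ₀ + Δu` for `d ≥ 1`; unlike `μ₀ + lap u` it is still the mass of the configuration with
odometer `u` when `d = 0`, where `lap` vanishes. -/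
noncomputable def massOf (μ0 u : Site d → ℝ) (x : Site d) : ℝ :=
  μ0 x + nbrSum u x / (2 * d) - u x

def visited (μ0 u : Site d → ℝ) : Set (Site d) :=
  Function.support μ0 ∪ {y | ∃ z, nbr z y ∧ 0 < u z}

theorem visited_mono (μ0 : Site d → ℝ) {u v : Site d → ℝ} (h : u ≤ v) :
    visited μ0 u ⊆ visited μ0 v :=
  Set.union_subset_union_right _ fun _ ⟨z, hz, hu⟩ => ⟨z, hz, hu.trans_le (h z)⟩

theorem visited_add_single (μ0 u : Site d → ℝ) {x : Site d} {m : ℝ} (hu : 0 ≤ u x)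
    (hm : 0 < m) : visited μ0 (u + Pi.single x m) = visited μ0 u ∪ {y | nbr x y} := by
  ext y
  simp only [visited, Set.mem_union, Set.mem_ofPred_eq, Pi.add_apply]
  constructor
  · rintro (h | ⟨z, hzy, hz⟩)
    · exact .inl (.inl h)
    · by_cases hzx : z = x
      · exact .inr (hzx ▸ hzy)
      · exact .inl (.inr ⟨z, hzy, by simpa [hzx] using hz⟩)
  · rintro ((h | ⟨z, hzy, hz⟩) | h)
    · exact .inl h
    · refine .inr ⟨z, hzy, ?_⟩
      by_cases hzx : z = x
      · subst hzx; simp only [Pi.single_eq_same]; linarith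
      · simpa [hzx] using hz
    · exact .inr ⟨x, h, by simp only [Pi.single_eq_same]; linarith⟩

section Topple

variable {κ : ℝ} {c : Config d} {x : Site d}

theorem Unstable.mem_V (h : Unstable κ c x) : x ∈ c.V := by
  rcases h with ⟨hx, -⟩ | ⟨hx, -⟩
  exacts [hx.1, hx.1]

theorem Unstable.mass_pos (hκ : 0 ≤ κ) (h : Unstable κ c x) : 0 < c.μ x := by
  rcases h with ⟨-, h⟩ | ⟨-, h⟩
  exacts [hκ.trans_lt h, h]

theorem topple_of_not_unstable (h : ¬ Unstable κ c x) : topple κ c x = c := by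
  rw [topple, if_neg h]

theorem topple_u_of_unstable (h : Unstable κ c x) :
    (topple κ c x).u = c.u + Pi.single x (c.μ x) := by
  ext y
  by_cases hy : y = x
  · subst hy; simp [topple, h]
  · simp [topple, h, hy]

theorem topple_V_of_unstable (h : Unstable κ c x) :
    (topple κ c x).V = c.V ∪ {y | nbr x y} := by
  simp [topple, h]

theorem le_topple_u (hκ : 0 ≤ κ) : c.u ≤ (topple κ c x).u := by
  by_cases h : Unstable κ c x
  · rw [topple_u_of_unstable h]
    exact le_add_of_nonneg_right (Pi.single_nonneg.mpr (h.mass_pos hκ).le)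
  · rw [topple_of_not_unstable h]

theorem topple_μ_eq_massOf {μ0 : Site d → ℝ} (hc : c.μ = massOf μ0 c.u) :
    (topple κ c x).μ = massOf μ0 (topple κ c x).u := by
  by_cases h : Unstable κ c x
  · ext y
    have hy : c.μ y = massOf μ0 c.u y := congrFun hc y
    rw [topple_u_of_unstable h]
    simp only [massOf, nbrSum_add, nbrSum_single, Pi.add_apply] at hy ⊢
    by_cases hyx : y = x
    · subst hyx
      simp only [topple, h, ↓reduceIte, nbr_irrefl, Pi.single_eq_same]
      linear_combination hy
    · rw [nbr_comm (x := y)]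
      simp only [topple, h, hyx, ↓reduceIte, Pi.single_eq_of_ne hyx]
      split_ifs <;> linear_combination hy
  · rwa [topple_of_not_unstable h]

theorem topple_V_eq_visited (hκ : 0 ≤ κ) {μ0 : Site d → ℝ} (hu : 0 ≤ c.u)
    (hc : c.V = visited μ0 c.u) : (topple κ c x).V = visited μ0 (topple κ c x).u := by
  by_cases h : Unstable κ c x
  · rw [topple_V_of_unstable h, topple_u_of_unstable h,
      visited_add_single μ0 c.u (hu x) (h.mass_pos hκ), hc]
  · rwa [topple_of_not_unstable h]

end Topple

section Evolve

variable {κ : ℝ} (μ0 : Site d → ℝ) (T : ℕ → Site d)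

theorem odometer_mono (hκ : 0 ≤ κ) : Monotone fun n => (evolve κ μ0 T n).u :=
  monotone_nat_of_le_succ fun _ => le_topple_u hκ

theorem odometer_nonneg (hκ : 0 ≤ κ) (n : ℕ) : 0 ≤ (evolve κ μ0 T n).u :=
  odometer_mono μ0 T hκ n.zero_le

theorem mass_eq_massOf (n : ℕ) : (evolve κ μ0 T n).μ = massOf μ0 (evolve κ μ0 T n).u := by
  induction n with
  | zero => ext x; simp [evolve, massOf, nbrSum]
  | succ n ih => exact topple_μ_eq_massOf ih

theorem V_eq_visited (hκ : 0 ≤ κ) (n : ℕ) :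
    (evolve κ μ0 T n).V = visited μ0 (evolve κ μ0 T n).u := by
  induction n with
  | zero => simp [evolve, visited]
  | succ n ih => exact topple_V_eq_visited hκ (odometer_nonneg μ0 T hκ n) ih

end Evolve

theorem mem_intr_iff {V : Set (Site d)} {x : Site d} :
    x ∈ intr V ↔ x ∈ V ∧ ∀ y, nbr x y → y ∈ V := by
  simp [intr, bdry]

section Limit

variable {κ : ℝ} {μ0 : Site d → ℝ} {T : ℕ → Site d} {uL : Site d → ℝ}
  (hconv : ∀ x, Tendsto (fun n => (evolve κ μ0 T n).u x) atTop (𝓝 (uL x)))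
include hconv

theorem odometer_le_of_tendsto (hκ : 0 ≤ κ) (n : ℕ) : (evolve κ μ0 T n).u ≤ uL :=
  fun x => Monotone.ge_of_tendsto (fun _ _ h => odometer_mono μ0 T hκ h x) (hconv x) n

theorem tendsto_mass (x : Site d) :
    Tendsto (fun n => (evolve κ μ0 T n).μ x) atTop (𝓝 (massOf μ0 uL x)) := by
  simp_rw [mass_eq_massOf, massOf, nbrSum]
  exact (tendsto_const_nhds.add ((tendsto_finsetSum _ fun i _ =>
    (hconv _).add (hconv _)).div_const _)).sub (hconv x)

theorem eventually_mem_V (hκ : 0 ≤ κ) {x : Site d} (hx : x ∈ visited μ0 uL) :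
    ∀ᶠ n in atTop, x ∈ (evolve κ μ0 T n).V := by
  simp_rw [V_eq_visited μ0 T hκ]
  rcases hx with hx | ⟨z, hzx, hz⟩
  · exact .of_forall fun n => .inl hx
  · exact ((hconv z).eventually (lt_mem_nhds hz)).mono fun n hn => .inr ⟨z, hzx, hn⟩

theorem not_eventually_unstable (hκ : 0 ≤ κ) (hT : Infinitive T) {x : Site d}
    (hx : 0 < massOf μ0 uL x) : ¬ ∀ᶠ n in atTop, Unstable κ (evolve κ μ0 T n) x := by
  intro hev
  have hgrow : ∀ᶠ n in atTop, uL x < (evolve κ μ0 T n).u x + (evolve κ μ0 T n).μ x :=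
    ((hconv x).add (tendsto_mass hconv x)).eventually (lt_mem_nhds (by linarith))
  obtain ⟨n, hn, hU, hgrow⟩ :=
    ((Nat.frequently_atTop_iff_infinite.mpr (hT x)).and_eventually (hev.and hgrow)).exists
  have hle := odometer_le_of_tendsto hconv hκ (n + 1) x
  change (topple κ (evolve κ μ0 T n) (T n)).u x ≤ uL x at hle
  rw [hn, topple_u_of_unstable hU] at hle
  simp only [Pi.add_apply, Pi.single_eq_same] at hle
  linarith

theorem massOf_le_of_mem_bdry (hκ : 0 ≤ κ) (hT : Infinitive T) {x : Site d}
    (hx : x ∈ bdry (visited μ0 uL)) : massOf μ0 uL x ≤ κ := by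
  by_contra! hgt
  obtain ⟨hxV, y, hxy, hy⟩ := hx
  refine not_eventually_unstable hconv hκ hT (hκ.trans_lt hgt) ?_
  filter_upwards [eventually_mem_V hconv hκ hxV,
    (tendsto_mass hconv x).eventually (lt_mem_nhds hgt)] with n hxn hμ
  have hVn := V_eq_visited μ0 T hκ n ▸ visited_mono μ0 (odometer_le_of_tendsto hconv hκ n)
  exact .inl ⟨⟨hxn, y, hxy, fun hyn => hy (hVn hyn)⟩, hμ⟩

theorem massOf_nonpos_of_mem_intr (hκ : 0 ≤ κ) (hT : Infinitive T) {x : Site d}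
    (hx : x ∈ intr (visited μ0 uL)) : massOf μ0 uL x ≤ 0 := by
  by_contra! hpos
  obtain ⟨hxV, hnbr⟩ := mem_intr_iff.mp hx
  have hnbrV : ∀ᶠ n in atTop, ∀ i, x + Pi.single i 1 ∈ (evolve κ μ0 T n).V ∧
      x - Pi.single i 1 ∈ (evolve κ μ0 T n).V :=
    eventually_all.mpr fun i => (eventually_mem_V hconv hκ (hnbr _ (nbr_add_single x i))).and
      (eventually_mem_V hconv hκ (hnbr _ (nbr_sub_single x i)))
  refine not_eventually_unstable hconv hκ hT hpos ?_
  filter_upwards [eventually_mem_V hconv hκ hxV, hnbrV,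
    (tendsto_mass hconv x).eventually (lt_mem_nhds hpos)] with n hxn hn hμ
  refine .inr ⟨mem_intr_iff.mpr ⟨hxn, fun y hy => ?_⟩, hμ⟩
  obtain ⟨i, rfl | rfl⟩ := nbr_iff.mp hy
  exacts [(hn i).1, (hn i).2]

theorem add_mass_le_of_le_limit (hκ : 0 ≤ κ) (hT : Infinitive T) {c : Config d} {x : Site d}
    (hcV : c.V ⊆ visited μ0 uL) (hcu : c.u ≤ uL) (hcu0 : 0 ≤ c.u)
    (hcμ : c.μ = massOf μ0 c.u) (hU : Unstable κ c x) : c.u x + c.μ x ≤ uL x := by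
  have hdom : c.u x + c.μ x ≤ uL x + massOf μ0 uL x := by
    have := div_le_div_of_nonneg_right (nbrSum_mono hcu x) (by positivity : (0 : ℝ) ≤ 2 * d)
    simp only [hcμ, massOf]
    linarith
  by_cases hint : x ∈ intr (visited μ0 uL)
  · linarith [massOf_nonpos_of_mem_intr hconv hκ hT hint]
  have hbd : x ∈ bdry (visited μ0 uL) := by_contra fun h => hint ⟨hcV hU.mem_V, h⟩
  obtain ⟨-, y, hxy, hy⟩ := id hbd
  have huL : uL x ≤ 0 := not_lt.mp fun h => hy (.inr ⟨x, hxy, h⟩)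
  rcases hU with ⟨-, hμ⟩ | ⟨hxc, -⟩
  · linarith [massOf_le_of_mem_bdry hconv hκ hT hbd, show 0 ≤ c.u x from hcu0 x]
  · exact absurd (hcV ((mem_intr_iff.mp hxc).2 y hxy)) hy

theorem odometer_le_limit (hκ : 0 ≤ κ) (hT : Infinitive T) (T' : ℕ → Site d) (n : ℕ) :
    (evolve κ μ0 T' n).u ≤ uL := by
  induction n with
  | zero => exact odometer_le_of_tendsto hconv hκ 0
  | succ n ih =>
    set c := evolve κ μ0 T' n
    change (topple κ c (T' n)).u ≤ uL
    by_cases hU : Unstable κ c (T' n)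
    · have hx := add_mass_le_of_le_limit hconv hκ hT
        (V_eq_visited μ0 T' hκ n ▸ visited_mono μ0 ih) ih (odometer_nonneg μ0 T' hκ n)
        (mass_eq_massOf μ0 T' n) hU
      rw [topple_u_of_unstable hU]
      intro y
      by_cases hy : y = T' n
      · subst hy; simpa using hx
      · simpa [hy] using ih y
    · rwa [topple_of_not_unstable hU]

end Limit

end Development

theorem stmt1_general {d : ℕ} (μ0 : Site d → ℝ)
    (κ : ℝ) (hκ : 0 < κ) (T1 T2 : ℕ → Site d)
    (hT1 : Infinitive T1) (hT2 : Infinitive T2)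
    (u1 u2 : Site d → ℝ)
    (hu1 : ∀ x : Site d,
      Tendsto (fun k => (evolve κ μ0 T1 k).u x) atTop (nhds (u1 x)))
    (hu2 : ∀ x : Site d,
      Tendsto (fun k => (evolve κ μ0 T2 k).u x) atTop (nhds (u2 x))) :
    ∀ x : Site d, u1 x = u2 x := fun x =>
  le_antisymm (le_of_tendsto' (hu1 x) fun n => odometer_le_limit hu2 hκ.le hT2 T1 n x)
    (le_of_tendsto' (hu2 x) fun n => odometer_le_limit hu1 hκ.le hT1 T2 n x)

/-- Abelian property. For every mass distribution `μ₀` on `ℤ^d` with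
finite support and every capacity `κ > 0`, any two infinitive toppling sequences
`T₁, T₂` for `BS(μ₀, κ)` have the same odometer: if `u₁` and `u₂` are the pointwise
limits of the odometer functions along `T₁` and `T₂`, then `u₁ = u₂` on `ℤ^d`. -/
theorem stmt1 {d : ℕ} (hd : 2 ≤ d) (μ0 : Site d → ℝ) (hμ0 : IsMassDist μ0)
    (κ : ℝ) (hκ : 0 < κ) (T1 T2 : ℕ → Site d)
    (hT1 : Infinitive T1) (hT2 : Infinitive T2)
    (u1 u2 : Site d → ℝ)
    (hu1 : ∀ x : Site d,
      Tendsto (fun k => (evolve κ μ0 T1 k).u x) atTop (nhds (u1 x)))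
    (hu2 : ∀ x : Site d,
      Tendsto (fun k => (evolve κ μ0 T2 k).u x) atTop (nhds (u2 x))) :
    ∀ x : Site d, u1 x = u2 x :=
  stmt1_general μ0 κ hκ T1 T2 hT1 hT2 u1 u2 hu1 hu2

end Sandpile
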